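/- arXiv:math/0209409 — 2 statements merged into one kernel-verified Lean document; each statement's English description precedes it below -/
import Mathlib

section
/- Let Λ be a weight such that (Λ,α) < 0 for all α ∈ A, (Λ,β) = 0 for all β ∈ B, and Λ + γ is regular. Let σ ∈ Δ_{A,B} be an (A,B)-root satisfying Σ_{α∈A} c_α(σ)·(α,α) ≥ Σ_{β∈B} c_β(σ)·(β,β). Then (Λ + γ, σ) ≤ 0. -/
open scoped RealInnerProductSpace
open scoped Classical

/-- A reduced crystallographic root system `roots` spanning a real inner product
space `V`, with a chosen set `pos` of positive roots, the corresponding base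
`simple` of simple roots, and the coefficient function `coeff`, where
`coeff ξ α = c_α(ξ)` is the coefficient of the simple root `α` in the unique
expression `ξ = ∑_{α ∈ simple} c_α(ξ) • α`. -/
structure RootSystemData (V : Type*) [NormedAddCommGroup V] [InnerProductSpace ℝ V] where
  roots : Finset V
  pos : Finset V
  simple : Finset V
  coeff : V → V → ℝ
  pos_subset : pos ⊆ roots
  simple_subset : simple ⊆ pos
  root_ne_zero : ∀ δ ∈ roots, δ ≠ (0 : V)
  neg_mem : ∀ δ ∈ roots, -δ ∈ roots
  pos_or_neg : ∀ δ ∈ roots, δ ∈ pos ∨ -δ ∈ pos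
  pos_neg_not : ∀ δ ∈ pos, -δ ∉ pos
  reduced : ∀ δ ∈ roots, ∀ t : ℝ, t • δ ∈ roots → t = 1 ∨ t = -1
  crystallographic : ∀ δ ∈ roots, ∀ ε ∈ roots, ∃ n : ℤ, 2 * ⟪δ, ε⟫ / ⟪ε, ε⟫ = (n : ℝ)
  reflect_mem : ∀ δ ∈ roots, ∀ ε ∈ roots, δ - (2 * ⟪δ, ε⟫ / ⟪ε, ε⟫) • ε ∈ roots
  span_eq_top : Submodule.span ℝ (simple : Set V) = ⊤
  linearIndependent : LinearIndependent ℝ (fun α : simple => (α : V))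
  coeff_spec : ∀ ξ : V, ξ = ∑ α ∈ simple, coeff ξ α • α
  pos_coeff_nonneg : ∀ δ ∈ pos, ∀ α ∈ simple, 0 ≤ coeff δ α

namespace RootSystemData

variable {V : Type*} [NormedAddCommGroup V] [InnerProductSpace ℝ V]

/-- The support `C(ξ)` of `ξ`: the set of simple roots with nonzero coefficient in `ξ`. -/
noncomputable def support (R : RootSystemData V) (ξ : V) : Finset V :=
  R.simple.filter fun α => R.coeff ξ α ≠ 0

/-- The coefficientwise partial order: `x ≤ y` iff `c_α(x) ≤ c_α(y)` for all simple `α`. -/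
def cle (R : RootSystemData V) (x y : V) : Prop :=
  ∀ α ∈ R.simple, R.coeff x α ≤ R.coeff y α

/-- An `(A,B)`-root: a positive root whose support lies in `A ∪ B` and which has a
strictly positive coefficient at some element of `A`. -/
def IsABRoot (R : RootSystemData V) (A B : Finset V) (δ : V) : Prop :=
  δ ∈ R.pos ∧ R.support δ ⊆ A ∪ B ∧ ∃ α₀ ∈ A, 0 < R.coeff δ α₀

/-- A significant `(A,B)`-root. -/
def IsSignificant (R : RootSystemData V) (A B : Finset V) (δ : V) : Prop :=
  R.IsABRoot A B δ ∧ ∃ σ : V, R.IsABRoot A B σ ∧ R.cle σ δ ∧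
    (∑ β ∈ B, R.coeff σ β * ⟪β, β⟫) ≤ (∑ α ∈ A, R.coeff σ α * ⟪α, α⟫) ∧
    (∀ x ∈ R.support (δ - σ), ∀ y ∈ R.support (δ - σ), ‖x‖ = ‖y‖) ∧
    (∀ x ∈ R.support (δ - σ), ‖x‖ ≤ ‖σ‖)

/-- `ℓ(A,B)`, the number of significant `(A,B)`-roots. -/
noncomputable def ell (R : RootSystemData V) (A B : Finset V) : ℕ :=
  (R.pos.filter fun δ => R.IsSignificant A B δ).card

/-- `γ`, the half-sum of the positive roots. -/
noncomputable def gamma (R : RootSystemData V) : V :=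
  (2 : ℝ)⁻¹ • ∑ δ ∈ R.pos, δ

/-- A weight: `2(β,α)/(α,α) ∈ ℤ` for all roots `α`. -/
def IsWeight (R : RootSystemData V) (β : V) : Prop :=
  ∀ δ ∈ R.roots, ∃ n : ℤ, 2 * ⟪β, δ⟫ / ⟪δ, δ⟫ = (n : ℝ)

/-- A regular weight: not orthogonal to any positive root. -/
def IsRegular (R : RootSystemData V) (lam : V) : Prop :=
  ∀ δ ∈ R.pos, ⟪lam, δ⟫ ≠ 0

end RootSystemData
section Aux

variable {V : Type*} [NormedAddCommGroup V] [InnerProductSpace ℝ V]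

lemma RSD.coeff_eq_of_sum (R : RootSystemData V) (f : V → ℝ) (ξ : V)
    (h : ∑ α ∈ R.simple, f α • α = ξ) :
    ∀ α ∈ R.simple, f α = R.coeff ξ α := by
  intro α hα
  have hz : ∑ β ∈ R.simple, (f β - R.coeff ξ β) • β = 0 := by
    simp only [sub_smul, Finset.sum_sub_distrib, h]
    rw [← R.coeff_spec ξ, sub_self]
  have hz' : ∑ β : R.simple, (f (β : V) - R.coeff ξ (β : V)) • (β : V) = 0 := by
    rw [Finset.sum_coe_sort R.simple (fun b => (f b - R.coeff ξ b) • b)]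
    exact hz
  have := Fintype.linearIndependent_iff.mp R.linearIndependent
    (fun β : R.simple => f (β : V) - R.coeff ξ (β : V)) hz' ⟨α, hα⟩
  simpa [sub_eq_zero] using this

lemma RSD.coeff_reflect (R : RootSystemData V) (x y : V) (t : ℝ) {α : V}
    (hα : α ∈ R.simple) :
    R.coeff (x - t • y) α = R.coeff x α - t * R.coeff y α := by
  refine (RSD.coeff_eq_of_sum R (fun β => R.coeff x β - t * R.coeff y β) _ ?_ α hα).symm
  simp only [sub_smul, Finset.sum_sub_distrib, mul_smul]
  rw [← Finset.smul_sum, ← R.coeff_spec x, ← R.coeff_spec y]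

lemma RSD.coeff_neg (R : RootSystemData V) (x : V) {α : V} (hα : α ∈ R.simple) :
    R.coeff (-x) α = -R.coeff x α := by
  have := RSD.coeff_reflect R 0 x (1 : ℝ) hα
  have h0 : ∀ β ∈ R.simple, R.coeff (0 : V) β = 0 := by
    intro β hβ
    exact (RSD.coeff_eq_of_sum R (fun _ => 0) 0 (by simp) β hβ).symm
  simpa [h0 α hα] using this

lemma RSD.coeff_simple (R : RootSystemData V) {α β : V} (hα : α ∈ R.simple)
    (hβ : β ∈ R.simple) :
    R.coeff α β = if β = α then 1 else 0 := by
  refine (RSD.coeff_eq_of_sum R (fun b => if b = α then 1 else 0) α ?_ β hβ).symm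
  have h1 : ∀ b ∈ R.simple, (if b = α then (1:ℝ) else 0) • b = if b = α then b else 0 := by
    intro b _; by_cases h : b = α <;> simp [h]
  rw [Finset.sum_congr rfl h1, Finset.sum_ite_eq' R.simple α (fun b => b), if_pos hα]

/-- A positive root other than a simple root `α` has a positive coefficient at some
simple root `β ≠ α`. -/
lemma RSD.exists_other_coeff (R : RootSystemData V) {α δ : V} (hα : α ∈ R.simple)
    (hδ : δ ∈ R.pos) (hne : δ ≠ α) :
    ∃ β ∈ R.simple, β ≠ α ∧ 0 < R.coeff δ β := by
  by_contra hcon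
  push_neg at hcon
  have hzero : ∀ β ∈ R.simple, β ≠ α → R.coeff δ β = 0 := by
    intro β hβ hba
    exact le_antisymm (hcon β hβ hba) (R.pos_coeff_nonneg δ hδ β hβ)
  have hδr : δ ∈ R.roots := R.pos_subset hδ
  have hδα : δ = R.coeff δ α • α := by
    conv_lhs => rw [R.coeff_spec δ]
    rw [Finset.sum_eq_single α (fun b hb hba => by rw [hzero b hb hba, zero_smul])
      (fun h => absurd hα h)]
  rcases R.reduced α (R.pos_subset (R.simple_subset hα)) (R.coeff δ α) (hδα ▸ hδr) with h1 | h1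
  · exact hne (by rw [hδα, h1, one_smul])
  · have : -δ = α := by rw [hδα, h1]; simp
    exact R.pos_neg_not δ hδ (this ▸ R.simple_subset hα)

/-- The reflection in a simple root `α` maps `pos \ {α}` into itself. -/
lemma RSD.reflect_pos (R : RootSystemData V) {α δ : V} (hα : α ∈ R.simple)
    (hδ : δ ∈ R.pos) (hne : δ ≠ α) :
    δ - (2 * ⟪δ, α⟫ / ⟪α, α⟫) • α ∈ R.pos ∧ δ - (2 * ⟪δ, α⟫ / ⟪α, α⟫) • α ≠ α := by
  have hαr : α ∈ R.roots := R.pos_subset (R.simple_subset hα)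
  have hαα : ⟪α, α⟫ ≠ 0 := inner_self_ne_zero.mpr (R.root_ne_zero α hαr)
  set c : ℝ := 2 * ⟪δ, α⟫ / ⟪α, α⟫ with hc
  have hroot : δ - c • α ∈ R.roots := R.reflect_mem δ (R.pos_subset hδ) α hαr
  obtain ⟨β, hβ, hβα, hβpos⟩ := RSD.exists_other_coeff R hα hδ hne
  have hcoeff : R.coeff (δ - c • α) β = R.coeff δ β := by
    rw [RSD.coeff_reflect R δ α c hβ, RSD.coeff_simple R hα hβ, if_neg hβα, mul_zero,
      sub_zero]
  have hpos : δ - c • α ∈ R.pos := by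
    rcases R.pos_or_neg _ hroot with h | h
    · exact h
    · exfalso
      have := R.pos_coeff_nonneg _ h β hβ
      rw [RSD.coeff_neg R _ hβ, hcoeff] at this
      linarith
  refine ⟨hpos, fun habs => ?_⟩
  -- if δ - c•α = α then δ = α + c•α = (1+c)•α, a multiple of α in pos, so δ = α
  have hδα : δ = (1 + c) • α := by
    rw [add_smul, one_smul]
    exact sub_eq_iff_eq_add.mp habs
  rcases R.reduced α hαr (1 + c) (hδα ▸ R.pos_subset hδ) with h1 | h1
  · exact hne (by rw [hδα, h1, one_smul])
  · have : -δ = α := by rw [hδα, h1]; simp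
    exact R.pos_neg_not δ hδ (this ▸ R.simple_subset hα)

lemma RSD.gamma_inner (R : RootSystemData V) {α : V} (hα : α ∈ R.simple) :
    ⟪R.gamma, α⟫ = ⟪α, α⟫ / 2 := by
  have hαp : α ∈ R.pos := R.simple_subset hα
  have hαr : α ∈ R.roots := R.pos_subset hαp
  have hαne : α ≠ 0 := R.root_ne_zero α hαr
  have hαα : (0:ℝ) < ⟪α, α⟫ :=
    lt_of_le_of_ne real_inner_self_nonneg (Ne.symm (inner_self_ne_zero.mpr hαne))
  set c : V → ℝ := fun δ => 2 * ⟪δ, α⟫ / ⟪α, α⟫ with hc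
  set f : V → V := fun δ => δ - c δ • α with hf
  have hcα : c α = 2 := by
    simp only [hc]
    field_simp
  -- f is an involution
  have hcf : ∀ x : V, c (x - c x • α) = - c x := by
    intro x
    simp only [hc, inner_sub_left, real_inner_smul_left]
    field_simp
    ring
  have hinv : ∀ x : V, f (f x) = x := by
    intro x
    show (x - c x • α) - c (x - c x • α) • α = x
    rw [hcf x, neg_smul, sub_neg_eq_add]
    abel
  -- sum over pos of f, two ways
  have key : ∑ δ ∈ R.pos, f δ = (∑ δ ∈ R.pos, δ) - (∑ δ ∈ R.pos, c δ) • α := by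
    simp only [hf, Finset.sum_sub_distrib, Finset.sum_smul]
  have key2 : ∑ δ ∈ R.pos, f δ = (∑ δ ∈ R.pos, δ) - (2:ℝ) • α := by
    rw [← Finset.sum_erase_add R.pos f hαp, ← Finset.sum_erase_add R.pos (fun δ => δ) hαp]
    have hbij : ∑ δ ∈ R.pos.erase α, f δ = ∑ δ ∈ R.pos.erase α, δ := by
      refine Finset.sum_nbij' (i := f) (j := f) ?_ ?_ ?_ ?_ ?_
      · intro a ha
        obtain ⟨h1, h2⟩ := RSD.reflect_pos R hα (Finset.mem_of_mem_erase ha)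
          (Finset.ne_of_mem_erase ha)
        exact Finset.mem_erase.mpr ⟨h2, h1⟩
      · intro a ha
        obtain ⟨h1, h2⟩ := RSD.reflect_pos R hα (Finset.mem_of_mem_erase ha)
          (Finset.ne_of_mem_erase ha)
        exact Finset.mem_erase.mpr ⟨h2, h1⟩
      · intro a _; exact hinv a
      · intro a _; exact hinv a
      · intro a _; rfl
    rw [hbij]
    have : f α = α - (2:ℝ) • α := by simp only [hf, hcα]
    rw [this]
    abel
  have hsum2 : (∑ δ ∈ R.pos, c δ) = 2 := by
    have heq := key.symm.trans key2
    have h1 : (∑ δ ∈ R.pos, c δ) • α = (2:ℝ) • α := sub_right_inj.mp heq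
    exact smul_left_injective ℝ hαne h1
  have hip : ∑ δ ∈ R.pos, ⟪δ, α⟫ = ⟪α, α⟫ := by
    have h2 : ∑ δ ∈ R.pos, c δ = (2 / ⟪α,α⟫) * ∑ δ ∈ R.pos, ⟪δ, α⟫ := by
      rw [Finset.mul_sum]
      exact Finset.sum_congr rfl (fun δ _ => by rw [hc]; ring)
    rw [hsum2] at h2
    have hne : ⟪α,α⟫ ≠ 0 := ne_of_gt hαα
    field_simp at h2
    linarith
  rw [RootSystemData.gamma, real_inner_smul_left, sum_inner, hip]
  ring

end Aux


/-- If `Λ` is a weight with `(Λ,α) < 0` for `α ∈ A`, `(Λ,β) = 0` for `β ∈ B`, `Λ + γ` is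
regular, and `σ` is an `(A,B)`-root with `∑_{α∈A} c_α(σ)(α,α) ≥ ∑_{β∈B} c_β(σ)(β,β)`,
then `(Λ + γ, σ) ≤ 0`. -/
theorem inner_nonpos_of_sum_ineq
    {V : Type*} [NormedAddCommGroup V] [InnerProductSpace ℝ V]
    (R : RootSystemData V)
    (A B : Finset V) (hA : A ⊆ R.simple) (hB : B ⊆ R.simple) (hAB : Disjoint A B)
    (Λ : V) (hw : R.IsWeight Λ)
    (hAneg : ∀ α ∈ A, ⟪Λ, α⟫ < 0) (hB0 : ∀ β ∈ B, ⟪Λ, β⟫ = 0)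
    (hreg : R.IsRegular (Λ + R.gamma))
    (σ : V) (hσ : R.IsABRoot A B σ)
    (hsum : (∑ β ∈ B, R.coeff σ β * ⟪β, β⟫) ≤ (∑ α ∈ A, R.coeff σ α * ⟪α, α⟫)) :
    ⟪Λ + R.gamma, σ⟫ ≤ 0 := by
  obtain ⟨hσpos, hsupp, -⟩ := hσ
  have hABs : A ∪ B ⊆ R.simple := Finset.union_subset hA hB
  have hexp : ⟪Λ + R.gamma, σ⟫ = ∑ β ∈ R.simple, R.coeff σ β * ⟪Λ + R.gamma, β⟫ := by
    conv_lhs => rw [R.coeff_spec σ]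
    rw [inner_sum]
    exact Finset.sum_congr rfl (fun β _ => by rw [real_inner_smul_right])
  have hvanish : ∀ β ∈ R.simple, β ∉ A ∪ B → R.coeff σ β * ⟪Λ + R.gamma, β⟫ = 0 := by
    intro β hβ hnm
    have hz : R.coeff σ β = 0 := by
      by_contra h
      exact hnm (hsupp (Finset.mem_filter.mpr ⟨hβ, h⟩))
    rw [hz, zero_mul]
  rw [← Finset.sum_subset hABs hvanish] at hexp
  have hAbound : ∀ α ∈ A, ⟪Λ + R.gamma, α⟫ ≤ -(⟪α, α⟫ / 2) := by
    intro α hαA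
    have hαs := hA hαA
    have hαp := R.simple_subset hαs
    have hαr := R.pos_subset hαp
    have hαα : (0:ℝ) < ⟪α, α⟫ :=
      lt_of_le_of_ne real_inner_self_nonneg
        (Ne.symm (inner_self_ne_zero.mpr (R.root_ne_zero α hαr)))
    obtain ⟨n, hn⟩ := hw α hαr
    rw [div_eq_iff (ne_of_gt hαα)] at hn
    have hΛα : ⟪Λ, α⟫ = (n : ℝ) * ⟪α, α⟫ / 2 := by linarith
    have hg : ⟪Λ + R.gamma, α⟫ = ((n : ℝ) + 1) * ⟪α, α⟫ / 2 := by
      rw [inner_add_left, RSD.gamma_inner R hαs, hΛα]; ring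
    have hnneg : (n : ℝ) < 0 := by
      have h0 := hAneg α hαA
      rw [hΛα] at h0
      nlinarith
    have hn1 : (n : ℝ) ≠ -1 := by
      intro h
      exact hreg α hαp (by rw [hg, h]; norm_num)
    have hn2 : (n : ℝ) ≤ -2 := by
      have h1 : n < 0 := by exact_mod_cast hnneg
      have h2 : n ≠ -1 := fun h => hn1 (by exact_mod_cast congrArg (Int.cast : ℤ → ℝ) h)
      have h3 : n ≤ -2 := by omega
      exact_mod_cast h3
    rw [hg]; nlinarith
  have hBval : ∀ β ∈ B, ⟪Λ + R.gamma, β⟫ = ⟪β, β⟫ / 2 := by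
    intro β hβB
    rw [inner_add_left, RSD.gamma_inner R (hB hβB), hB0 β hβB, zero_add]
  rw [hexp, Finset.sum_union hAB]
  have h1 : ∑ α ∈ A, R.coeff σ α * ⟪Λ + R.gamma, α⟫ ≤
      ∑ α ∈ A, R.coeff σ α * (-(⟪α, α⟫ / 2)) :=
    Finset.sum_le_sum fun α hαA =>
      mul_le_mul_of_nonneg_left (hAbound α hαA) (R.pos_coeff_nonneg σ hσpos α (hA hαA))
  have h2 : ∑ β ∈ B, R.coeff σ β * ⟪Λ + R.gamma, β⟫ =
      ∑ β ∈ B, R.coeff σ β * (⟪β, β⟫ / 2) :=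
    Finset.sum_congr rfl fun β hβB => by rw [hBval β hβB]
  have h3 : ∑ α ∈ A, R.coeff σ α * (-(⟪α, α⟫ / 2)) =
      -(1/2) * ∑ α ∈ A, R.coeff σ α * ⟪α, α⟫ := by
    rw [Finset.mul_sum]; exact Finset.sum_congr rfl fun α _ => by ring
  have h4 : ∑ β ∈ B, R.coeff σ β * (⟪β, β⟫ / 2) =
      (1/2) * ∑ β ∈ B, R.coeff σ β * ⟪β, β⟫ := by
    rw [Finset.mul_sum]; exact Finset.sum_congr rfl fun β _ => by ring
  rw [h2, h4]
  linarith [h1, h3, hsum]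
end

section
/- Let σ, δ ∈ Δ_{A,B} be (A,B)-roots with σ ≤ δ. Then there exists a finite sequence δ₀, δ₁, …, δ_m of (A,B)-roots such that δ₀ = σ, δ_m = δ, and δ_i − δ_{i−1} ∈ C(δ − σ) for all i = 1, …, m. -/
open scoped RealInnerProductSpace
open scoped Classical

namespace RootSystemData

variable {V : Type*} [NormedAddCommGroup V] [InnerProductSpace ℝ V] (R : RootSystemData V)

lemma coeff_eq_of_sum {f : V → ℝ} {ξ : V} (h : ∑ α ∈ R.simple, f α • α = ξ) :
    ∀ α ∈ R.simple, R.coeff ξ α = f α := by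
  have h2 := R.coeff_spec ξ
  have h3 : ∑ α ∈ R.simple, (f α - R.coeff ξ α) • α = 0 := by
    simp only [sub_smul, Finset.sum_sub_distrib, h, ← h2, sub_self]
  have h4 : ∑ i : R.simple, (f i.1 - R.coeff ξ i.1) • (i : V) = 0 := by
    rw [← h3]
    exact Finset.sum_attach R.simple (fun α => (f α - R.coeff ξ α) • α)
  have h5 := (Fintype.linearIndependent_iff.mp R.linearIndependent) _ h4
  intro α hα
  have := h5 ⟨α, hα⟩
  dsimp at this
  linarith

lemma coeff_add (x y : V) : ∀ α ∈ R.simple, R.coeff (x + y) α = R.coeff x α + R.coeff y α := by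
  apply R.coeff_eq_of_sum
  simp only [add_smul, Finset.sum_add_distrib]
  rw [← R.coeff_spec, ← R.coeff_spec]

lemma coeff_smul (c : ℝ) (x : V) : ∀ α ∈ R.simple, R.coeff (c • x) α = c * R.coeff x α := by
  apply R.coeff_eq_of_sum
  simp only [mul_smul, ← Finset.smul_sum]
  rw [← R.coeff_spec]

lemma coeff_zero : ∀ α ∈ R.simple, R.coeff 0 α = 0 := by
  apply R.coeff_eq_of_sum; simp

lemma coeff_neg (x : V) : ∀ α ∈ R.simple, R.coeff (-x) α = - R.coeff x α := by
  intro α hα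
  have h := R.coeff_smul (-1) x α hα
  rw [neg_one_smul] at h
  rw [h]; ring

lemma coeff_sub (x y : V) : ∀ α ∈ R.simple, R.coeff (x - y) α = R.coeff x α - R.coeff y α := by
  intro α hα
  rw [sub_eq_add_neg, R.coeff_add _ _ α hα, R.coeff_neg _ α hα, sub_eq_add_neg]

lemma coeff_simple {β : V} (hβ : β ∈ R.simple) :
    ∀ α ∈ R.simple, R.coeff β α = if α = β then 1 else 0 := by
  apply R.coeff_eq_of_sum
  simp only [ite_smul, one_smul, zero_smul]
  simp [Finset.sum_ite_eq' R.simple β, hβ]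

lemma ext_coeff {x y : V} (h : ∀ α ∈ R.simple, R.coeff x α = R.coeff y α) : x = y := by
  rw [R.coeff_spec x, R.coeff_spec y]
  exact Finset.sum_congr rfl fun α hα => by rw [h α hα]

end RootSystemData

lemma inner_self_pos' {V : Type*} [NormedAddCommGroup V] [InnerProductSpace ℝ V]
    {x : V} (hx : x ≠ 0) : 0 < ⟪x, x⟫ :=
  lt_of_le_of_ne real_inner_self_nonneg (Ne.symm (inner_self_ne_zero.2 hx))

namespace RootSystemData

variable {V : Type*} [NormedAddCommGroup V] [InnerProductSpace ℝ V] (R : RootSystemData V)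

/-- If two roots have negative inner product and are not opposite, their sum is a root. -/
lemma add_mem_roots {β γ : V} (hβ : β ∈ R.roots) (hγ : γ ∈ R.roots)
    (hneg : ⟪β, γ⟫ < 0) (hne : β + γ ≠ 0) : β + γ ∈ R.roots := by
  obtain ⟨p, hp⟩ := R.crystallographic β hβ γ hγ
  obtain ⟨q, hq⟩ := R.crystallographic γ hγ β hβ
  have hββ : 0 < ⟪β, β⟫ := inner_self_pos' (R.root_ne_zero β hβ)
  have hγγ : 0 < ⟪γ, γ⟫ := inner_self_pos' (R.root_ne_zero γ hγ)
  have hγβ : ⟪γ, β⟫ < 0 := by rwa [real_inner_comm]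
  have hpneg : (p : ℝ) < 0 := by
    rw [← hp]; exact div_neg_of_neg_of_pos (by linarith) hγγ
  have hqneg : (q : ℝ) < 0 := by
    rw [← hq]; exact div_neg_of_neg_of_pos (by linarith) hββ
  have hp0 : p ≤ -1 := by
    have : p < 0 := by exact_mod_cast hpneg
    omega
  have hq0 : q ≤ -1 := by
    have : q < 0 := by exact_mod_cast hqneg
    omega
  by_cases hp1 : p = -1
  · have := R.reflect_mem β hβ γ hγ
    rw [hp, hp1] at this
    simpa [sub_neg_eq_add, neg_smul, one_smul] using this
  by_cases hq1 : q = -1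
  · have := R.reflect_mem γ hγ β hβ
    rw [hq, hq1] at this
    rw [add_comm]
    simpa [sub_neg_eq_add, neg_smul, one_smul] using this
  · exfalso
    have hp2 : (p : ℝ) ≤ -2 := by exact_mod_cast (by omega : p ≤ -2)
    have hq2 : (q : ℝ) ≤ -2 := by exact_mod_cast (by omega : q ≤ -2)
    have h1 : 2 * ⟪β, γ⟫ = (p : ℝ) * ⟪γ, γ⟫ := (div_eq_iff (ne_of_gt hγγ)).mp hp
    have h2 : 2 * ⟪γ, β⟫ = (q : ℝ) * ⟪β, β⟫ := (div_eq_iff (ne_of_gt hββ)).mp hq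
    have hN : 0 < ⟪β + γ, β + γ⟫ := inner_self_pos' hne
    have hexp : ⟪β + γ, β + γ⟫ = ⟪β, β⟫ + 2 * ⟪β, γ⟫ + ⟪γ, γ⟫ := real_inner_add_add_self β γ
    rw [real_inner_comm] at h2
    nlinarith [hN, hexp, h1, h2, hp2, hq2, hββ, hγγ]

/-- A nonzero vector with nonnegative coefficients pairs positively with some simple root
in its support. -/
lemma exists_good_simple {x : V} (hx : x ≠ 0) (hnn : ∀ γ ∈ R.simple, 0 ≤ R.coeff x γ) :
    ∃ β ∈ R.simple, 0 < R.coeff x β ∧ 0 < ⟪x, β⟫ := by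
  have hxx : 0 < ⟪x, x⟫ := inner_self_pos' hx
  have hsum : ⟪x, x⟫ = ∑ β ∈ R.simple, R.coeff x β * ⟪x, β⟫ := by
    calc (⟪x, x⟫ : ℝ) = ⟪x, ∑ α ∈ R.simple, R.coeff x α • α⟫ := by rw [← R.coeff_spec]
    _ = ∑ β ∈ R.simple, R.coeff x β * ⟪x, β⟫ := by
        rw [inner_sum]; exact Finset.sum_congr rfl fun β _ => real_inner_smul_right x β _
  by_contra hcon
  push_neg at hcon
  have : ∑ β ∈ R.simple, R.coeff x β * ⟪x, β⟫ ≤ 0 := by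
    apply Finset.sum_nonpos
    intro β hβ
    rcases lt_or_eq_of_le (hnn β hβ) with h | h
    · exact mul_nonpos_of_nonneg_of_nonpos (le_of_lt h) (hcon β hβ h)
    · rw [← h, zero_mul]
  linarith [hsum ▸ hxx]

/-- A root with positive coefficient at some simple root is positive. -/
lemma mem_pos_of_pos_coeff {δ β : V} (hδ : δ ∈ R.roots) (hβ : β ∈ R.simple)
    (h : 0 < R.coeff δ β) : δ ∈ R.pos := by
  rcases R.pos_or_neg δ hδ with h' | h'
  · exact h'
  · exfalso
    have := R.pos_coeff_nonneg _ h' β hβ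
    rw [R.coeff_neg δ β hβ] at this
    linarith

/-- A positive root supported on a single simple root equals that simple root. -/
lemma eq_simple_of_support {δ β : V} (hδ : δ ∈ R.pos) (hβ : β ∈ R.simple)
    (h : ∀ γ ∈ R.simple, γ ≠ β → R.coeff δ γ = 0) : δ = β := by
  have hsum : δ = R.coeff δ β • β := by
    conv_lhs => rw [R.coeff_spec δ]
    rw [Finset.sum_eq_single β]
    · intro γ hγ hne
      rw [h γ hγ hne, zero_smul]
    · intro hβ'; exact absurd hβ hβ'
  have hroot : R.coeff δ β • β ∈ R.roots := hsum ▸ R.pos_subset hδ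
  have hβroot : β ∈ R.roots := R.pos_subset (R.simple_subset hβ)
  rcases R.reduced β hβroot _ hroot with h1 | h1
  · rw [hsum, h1, one_smul]
  · exfalso
    have := R.pos_coeff_nonneg δ hδ β hβ
    linarith [h1 ▸ this]


/-- Coefficients of positive roots are integers. -/
lemma coeff_int : ∀ δ ∈ R.pos, ∀ α ∈ R.simple, ∃ n : ℤ, R.coeff δ α = (n : ℝ) := by
  suffices H : ∀ N : ℕ, ∀ δ ∈ R.pos,
      (R.pos.filter fun τ => R.cle τ δ ∧ τ ≠ δ).card ≤ N →
      ∀ α ∈ R.simple, ∃ n : ℤ, R.coeff δ α = (n : ℝ) by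
    intro δ hδ
    exact H _ δ hδ le_rfl
  intro N
  induction N using Nat.strong_induction_on with
  | _ N IH =>
  intro δ hδ hcard α hα
  have hδroot : δ ∈ R.roots := R.pos_subset hδ
  obtain ⟨β, hβ, hcβ, hiβ⟩ := R.exists_good_simple (R.root_ne_zero δ hδroot)
      (fun γ hγ => R.pos_coeff_nonneg δ hδ γ hγ)
  have hβroot : β ∈ R.roots := R.pos_subset (R.simple_subset hβ)
  by_cases heq : δ = β
  · subst heq
    refine ⟨if α = δ then 1 else 0, ?_⟩
    rw [R.coeff_simple hβ α hα]
    split_ifs <;> simp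
  · obtain ⟨n, hn⟩ := R.crystallographic δ hδroot β hβroot
    have hββ : 0 < ⟪β, β⟫ := inner_self_pos' (R.root_ne_zero β hβroot)
    have hnpos : (0:ℝ) < (n : ℝ) := by
      rw [← hn]; exact div_pos (by linarith) hββ
    set δ' := δ - ((n : ℝ)) • β with hδ'def
    have hδ'root : δ' ∈ R.roots := by
      have := R.reflect_mem δ hδroot β hβroot
      rwa [hn] at this
    have hc' : ∀ γ ∈ R.simple, R.coeff δ' γ = R.coeff δ γ - n * (if γ = β then 1 else 0) := by
      intro γ hγ
      rw [hδ'def, R.coeff_sub _ _ γ hγ, R.coeff_smul _ _ γ hγ, R.coeff_simple hβ γ hγ]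
    have hδ'pos : δ' ∈ R.pos := by
      rcases R.pos_or_neg δ' hδ'root with h | h
      · exact h
      · exfalso
        have hzero : ∀ γ ∈ R.simple, γ ≠ β → R.coeff δ γ = 0 := by
          intro γ hγ hne
          have h1 := R.pos_coeff_nonneg _ h γ hγ
          rw [R.coeff_neg _ γ hγ, hc' γ hγ, if_neg hne] at h1
          have h2 := R.pos_coeff_nonneg δ hδ γ hγ
          linarith
        exact heq (R.eq_simple_of_support hδ hβ hzero)
    have hcle : R.cle δ' δ := by
      intro γ hγ
      rw [hc' γ hγ]
      have h0 : (0:ℝ) ≤ (n:ℝ) * (if γ = β then 1 else 0) := by positivity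
      linarith
    have hne' : δ' ≠ δ := by
      intro h
      have h1 := hc' β hβ
      rw [h, if_pos rfl] at h1
      simp only [mul_one] at h1
      linarith
    have hlt : (R.pos.filter fun τ => R.cle τ δ' ∧ τ ≠ δ').card <
        (R.pos.filter fun τ => R.cle τ δ ∧ τ ≠ δ).card := by
      apply Finset.card_lt_card
      have hsub : (R.pos.filter fun τ => R.cle τ δ' ∧ τ ≠ δ') ⊆
          (R.pos.filter fun τ => R.cle τ δ ∧ τ ≠ δ) := by
        intro τ hτ
        rw [Finset.mem_filter] at hτ ⊢
        obtain ⟨hτp, hτle, hτne⟩ := hτ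
        refine ⟨hτp, fun γ hγ => le_trans (hτle γ hγ) (hcle γ hγ), ?_⟩
        intro h
        subst h
        exact hne' (R.ext_coeff fun γ hγ => le_antisymm (hcle γ hγ) (hτle γ hγ))
      refine (Finset.ssubset_iff_of_subset hsub).mpr ⟨δ', Finset.mem_filter.2 ⟨hδ'pos, hcle, hne'⟩, ?_⟩
      simp [Finset.mem_filter]
    obtain ⟨m, hm⟩ := IH _ (lt_of_lt_of_le hlt hcard) δ' hδ'pos le_rfl α hα
    refine ⟨m + n * (if α = β then 1 else 0), ?_⟩
    have h3 := hc' α hα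
    split_ifs at h3 ⊢ <;> push_cast <;> linarith [hm]


end RootSystemData


/-- If `σ ≤ δ` are `(A,B)`-roots, there is a chain of `(A,B)`-roots from `σ` to `δ` whose
consecutive differences are simple roots in the support `C(δ − σ)`. -/
theorem chain_between_comparable_AB_roots
    {V : Type*} [NormedAddCommGroup V] [InnerProductSpace ℝ V]
    (R : RootSystemData V)
    (A B : Finset V) (hA : A ⊆ R.simple) (hB : B ⊆ R.simple) (hAB : Disjoint A B)
    (σ δ : V) (hσ : R.IsABRoot A B σ) (hδ : R.IsABRoot A B δ) (hle : R.cle σ δ) :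
    ∃ (m : ℕ) (d : ℕ → V), d 0 = σ ∧ d m = δ ∧ (∀ i ≤ m, R.IsABRoot A B (d i)) ∧
      ∀ i, 1 ≤ i → i ≤ m → d i - d (i - 1) ∈ R.support (δ - σ) := by
  classical
  suffices H : ∀ N : ℕ, ∀ σ δ : V, R.IsABRoot A B σ → R.IsABRoot A B δ → R.cle σ δ →
      (R.pos.filter fun τ => R.cle σ τ ∧ R.cle τ δ).card ≤ N →
      ∃ (m : ℕ) (d : ℕ → V), d 0 = σ ∧ d m = δ ∧ (∀ i ≤ m, R.IsABRoot A B (d i)) ∧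
        ∀ i, 1 ≤ i → i ≤ m → d i - d (i - 1) ∈ R.support (δ - σ) by
    exact H _ σ δ hσ hδ hle le_rfl
  clear hσ hδ hle σ δ
  intro N
  induction N using Nat.strong_induction_on with
  | _ N IH =>
  intro σ δ hσ hδ hle hcard
  by_cases heq : σ = δ
  · subst heq
    refine ⟨0, fun _ => σ, rfl, rfl, fun i _ => hσ, fun i h1 h2 => by omega⟩
  · have hδσ : δ - σ ≠ 0 := sub_ne_zero.mpr (fun h => heq h.symm)
    have hnn : ∀ γ ∈ R.simple, 0 ≤ R.coeff (δ - σ) γ := by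
      intro γ hγ
      rw [R.coeff_sub _ _ γ hγ]
      linarith [hle γ hγ]
    obtain ⟨β, hβs, hcβ, hiβ⟩ := R.exists_good_simple hδσ hnn
    have hβroot : β ∈ R.roots := R.pos_subset (R.simple_subset hβs)
    have hσroot : σ ∈ R.roots := R.pos_subset hσ.1
    have hδroot : δ ∈ R.roots := R.pos_subset hδ.1
    obtain ⟨nδ, hnδ⟩ := R.coeff_int δ hδ.1 β hβs
    obtain ⟨nσ, hnσ⟩ := R.coeff_int σ hσ.1 β hβs
    have hsubβ : R.coeff (δ - σ) β = R.coeff δ β - R.coeff σ β := R.coeff_sub δ σ β hβs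
    have hgap : R.coeff σ β + 1 ≤ R.coeff δ β := by
      have h1 : (nσ : ℝ) < nδ := by
        rw [← hnδ, ← hnσ]
        rw [hsubβ] at hcβ
        linarith
      have h2 : nσ + 1 ≤ nδ := by exact_mod_cast h1
      rw [hnδ, hnσ]
      exact_mod_cast h2
    have hβsuppδσ : β ∈ R.support (δ - σ) := Finset.mem_filter.2 ⟨hβs, ne_of_gt hcβ⟩
    have hσβnn : 0 ≤ R.coeff σ β := R.pos_coeff_nonneg σ hσ.1 β hβs
    have hβAB : β ∈ A ∪ B := by
      apply hδ.2.1
      refine Finset.mem_filter.2 ⟨hβs, ?_⟩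
      intro h; rw [h] at hgap; linarith
    obtain ⟨α₀, hα₀A, hα₀pos⟩ := hσ.2.2
    have hα₀s : α₀ ∈ R.simple := hA hα₀A
    have hcases : ⟪σ, β⟫ < 0 ∨ 0 < ⟪δ, β⟫ := by
      by_contra h
      push_neg at h
      have hsb := inner_sub_left (𝕜 := ℝ) δ σ β
      rw [hsb] at hiβ
      linarith [h.1, h.2]
    rcases hcases with hσβ | hδβ
    · -- upward step σ → σ + β
      set σ' := σ + β with hσ'def
      have hc' : ∀ γ ∈ R.simple, R.coeff σ' γ = R.coeff σ γ + (if γ = β then 1 else 0) := by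
        intro γ hγ
        rw [hσ'def, R.coeff_add _ _ γ hγ, R.coeff_simple hβs γ hγ]
      have hσ'ne : σ' ≠ 0 := by
        intro h
        have h1 := hc' β hβs
        rw [if_pos rfl, h, R.coeff_zero β hβs] at h1
        linarith
      have hσ'root : σ' ∈ R.roots := R.add_mem_roots hσroot hβroot hσβ hσ'ne
      have hσ'pos : σ' ∈ R.pos := by
        apply R.mem_pos_of_pos_coeff hσ'root hβs
        rw [hc' β hβs, if_pos rfl]
        linarith
      have hcle' : R.cle σ' δ := by
        intro γ hγ
        rw [hc' γ hγ]
        by_cases hgb : γ = β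
        · subst hgb; rw [if_pos rfl]; linarith
        · rw [if_neg hgb]; simpa using hle γ hγ
      have hσ'AB : R.IsABRoot A B σ' := by
        refine ⟨hσ'pos, ?_, α₀, hα₀A, ?_⟩
        · intro γ hγ
          obtain ⟨hγs, hγne⟩ := Finset.mem_filter.mp hγ
          by_cases hgb : γ = β
          · subst hgb; exact hβAB
          · apply hσ.2.1
            refine Finset.mem_filter.2 ⟨hγs, ?_⟩
            rw [hc' γ hγs, if_neg hgb] at hγne
            simpa using hγne
        · rw [hc' α₀ hα₀s]
          have h0 : (0:ℝ) ≤ if α₀ = β then 1 else 0 := by positivity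
          linarith
      have hcleσσ' : R.cle σ σ' := by
        intro γ hγ
        rw [hc' γ hγ]
        have h0 : (0:ℝ) ≤ if γ = β then 1 else 0 := by positivity
        linarith
      have hlt : (R.pos.filter fun τ => R.cle σ' τ ∧ R.cle τ δ).card <
          (R.pos.filter fun τ => R.cle σ τ ∧ R.cle τ δ).card := by
        apply Finset.card_lt_card
        have hsub : (R.pos.filter fun τ => R.cle σ' τ ∧ R.cle τ δ) ⊆
            (R.pos.filter fun τ => R.cle σ τ ∧ R.cle τ δ) := by
          intro τ hτ
          rw [Finset.mem_filter] at hτ ⊢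
          exact ⟨hτ.1, fun γ hγ => le_trans (hcleσσ' γ hγ) (hτ.2.1 γ hγ), hτ.2.2⟩
        refine (Finset.ssubset_iff_of_subset hsub).mpr
          ⟨σ, Finset.mem_filter.2 ⟨hσ.1, fun γ hγ => le_rfl, hle⟩, ?_⟩
        intro h
        have h1 := (Finset.mem_filter.mp h).2.1 β hβs
        rw [hc' β hβs, if_pos rfl] at h1
        linarith
      obtain ⟨m, d, hd0, hdm, hdAB, hdstep⟩ :=
        IH _ (lt_of_lt_of_le hlt hcard) σ' δ hσ'AB hδ hcle' le_rfl
      have hsuppmono : R.support (δ - σ') ⊆ R.support (δ - σ) := by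
        intro γ hγ
        obtain ⟨hγs, hγne⟩ := Finset.mem_filter.mp hγ
        refine Finset.mem_filter.2 ⟨hγs, ?_⟩
        by_cases hgb : γ = β
        · subst hgb; exact ne_of_gt hcβ
        · intro h0
          apply hγne
          rw [R.coeff_sub _ _ γ hγs, hc' γ hγs, if_neg hgb]
          rw [R.coeff_sub _ _ γ hγs] at h0
          simp only [add_zero]
          linarith
      refine ⟨m + 1, fun i => if i = 0 then σ else d (i - 1), by simp, ?_, ?_, ?_⟩
      · dsimp only
        rw [if_neg (by omega : ¬ m + 1 = 0)]
        simpa using hdm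
      · intro i hi
        by_cases h0 : i = 0
        · subst h0; simpa using hσ
        · dsimp only
          rw [if_neg h0]
          exact hdAB (i - 1) (by omega)
      · intro i h1 h2
        dsimp only
        by_cases hi1 : i = 1
        · subst hi1
          simp only [show (1:ℕ) - 1 = 0 from rfl, if_pos rfl, if_neg one_ne_zero]
          rw [hd0, hσ'def]
          simpa using hβsuppδσ
        · rw [if_neg (by omega : ¬ i = 0), if_neg (by omega : ¬ i - 1 = 0)]
          exact hsuppmono (hdstep (i - 1) (by omega) (by omega))
    · -- downward step δ → δ - β
      set δ' := δ - β with hδ'def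
      have hc' : ∀ γ ∈ R.simple, R.coeff δ' γ = R.coeff δ γ - (if γ = β then 1 else 0) := by
        intro γ hγ
        rw [hδ'def, R.coeff_sub _ _ γ hγ, R.coeff_simple hβs γ hγ]
      have hcle' : R.cle σ δ' := by
        intro γ hγ
        rw [hc' γ hγ]
        by_cases hgb : γ = β
        · subst hgb; rw [if_pos rfl]; linarith
        · rw [if_neg hgb]; simpa using hle γ hγ
      have hδ'α₀ : 0 < R.coeff δ' α₀ := lt_of_lt_of_le hα₀pos (hcle' α₀ hα₀s)
      have hδ'ne : δ' ≠ 0 := by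
        intro h
        rw [h, R.coeff_zero α₀ hα₀s] at hδ'α₀
        exact lt_irrefl 0 hδ'α₀
      have hδ'root : δ' ∈ R.roots := by
        have h := R.add_mem_roots hδroot (R.neg_mem β hβroot)
          (by rw [inner_neg_right]; linarith) (by rwa [← sub_eq_add_neg])
        rwa [← sub_eq_add_neg] at h
      have hδ'pos : δ' ∈ R.pos := R.mem_pos_of_pos_coeff hδ'root hα₀s hδ'α₀
      have hδ'AB : R.IsABRoot A B δ' := by
        refine ⟨hδ'pos, ?_, α₀, hα₀A, hδ'α₀⟩
        intro γ hγ
        obtain ⟨hγs, hγne⟩ := Finset.mem_filter.mp hγ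
        apply hδ.2.1
        refine Finset.mem_filter.2 ⟨hγs, ?_⟩
        by_cases hgb : γ = β
        · subst hgb
          intro h0; rw [h0] at hgap; linarith
        · rw [hc' γ hγs, if_neg hgb] at hγne
          simpa using hγne
      have hcleδ'δ : R.cle δ' δ := by
        intro γ hγ
        rw [hc' γ hγ]
        have h0 : (0:ℝ) ≤ if γ = β then 1 else 0 := by positivity
        linarith
      have hlt : (R.pos.filter fun τ => R.cle σ τ ∧ R.cle τ δ').card <
          (R.pos.filter fun τ => R.cle σ τ ∧ R.cle τ δ).card := by
        apply Finset.card_lt_card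
        have hsub : (R.pos.filter fun τ => R.cle σ τ ∧ R.cle τ δ') ⊆
            (R.pos.filter fun τ => R.cle σ τ ∧ R.cle τ δ) := by
          intro τ hτ
          rw [Finset.mem_filter] at hτ ⊢
          exact ⟨hτ.1, hτ.2.1, fun γ hγ => le_trans (hτ.2.2 γ hγ) (hcleδ'δ γ hγ)⟩
        refine (Finset.ssubset_iff_of_subset hsub).mpr
          ⟨δ, Finset.mem_filter.2 ⟨hδ.1, hle, fun γ hγ => le_rfl⟩, ?_⟩
        intro h
        have h1 := (Finset.mem_filter.mp h).2.2 β hβs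
        rw [hc' β hβs, if_pos rfl] at h1
        linarith
      obtain ⟨m, d, hd0, hdm, hdAB, hdstep⟩ :=
        IH _ (lt_of_lt_of_le hlt hcard) σ δ' hσ hδ'AB hcle' le_rfl
      have hsuppmono : R.support (δ' - σ) ⊆ R.support (δ - σ) := by
        intro γ hγ
        obtain ⟨hγs, hγne⟩ := Finset.mem_filter.mp hγ
        refine Finset.mem_filter.2 ⟨hγs, ?_⟩
        by_cases hgb : γ = β
        · subst hgb; exact ne_of_gt hcβ
        · intro h0
          apply hγne
          rw [R.coeff_sub _ _ γ hγs, hc' γ hγs, if_neg hgb]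
          rw [R.coeff_sub _ _ γ hγs] at h0
          simp only [sub_zero]
          linarith
      refine ⟨m + 1, fun i => if i ≤ m then d i else δ, ?_, ?_, ?_, ?_⟩
      · dsimp only
        rw [if_pos (by omega : 0 ≤ m)]; exact hd0
      · dsimp only
        rw [if_neg (by omega : ¬ m + 1 ≤ m)]
      · intro i hi
        dsimp only
        by_cases him : i ≤ m
        · rw [if_pos him]; exact hdAB i him
        · rw [if_neg him]; exact hδ
      · intro i h1 h2
        dsimp only
        by_cases him : i ≤ m
        · rw [if_pos him, if_pos (by omega : i - 1 ≤ m)]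
          exact hsuppmono (hdstep i h1 him)
        · have hieq : i = m + 1 := by omega
          subst hieq
          rw [if_neg (by omega : ¬ m + 1 ≤ m), if_pos (by omega : m + 1 - 1 ≤ m),
            show m + 1 - 1 = m from rfl, hdm, hδ'def]
          simpa [sub_sub_cancel] using hβsuppδσ
end
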